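/- Let k ≥ 1, S = {x ∈ ℝⁿ : x₁ = ⋯ = x_k = 0}, α the local real blow-down and π̃(((ε₁,r₁),…,(ε_k,r_k)), y) = (ε₁⋯ε_k, r₁⋯r_k). Then the restriction of α to the set α⁻¹(S) ∩ π̃⁻¹((1,0)) → S is a covering map, every fibre of which has exactly 2^{k−1} elements; it is homeomorphic over S to the trivial cover {ε ∈ {-1,1}^k : ε₁⋯ε_k = 1} × S. -/

import Mathlib

/-- The half-ray with signs `{-1,1} × [0,∞)` with its subspace (product) topology. -/
abbrev SignRay : Type := ({-1, 1} : Set ℝ) × (Set.Ici (0 : ℝ))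

/-- The local real blow-down
`α(((ε₁,r₁),…,(ε_k,r_k)), y) = (ε₁r₁, …, ε_k r_k, y)`. -/
def blowDownR (k m : ℕ) (p : (Fin k → SignRay) × (Fin m → ℝ)) :
    (Fin k → ℝ) × (Fin m → ℝ) :=
  (fun i => ((p.1 i).1 : ℝ) * ((p.1 i).2 : ℝ), p.2)

/-- The blown-up degeneration
`π̃(((ε₁,r₁),…,(ε_k,r_k)), y) = (ε₁⋯ε_k, r₁⋯r_k)`. -/
def tpiR (k m : ℕ) (p : (Fin k → SignRay) × (Fin m → ℝ)) : SignRay :=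
  (⟨∏ i, ((p.1 i).1 : ℝ), by
      refine Finset.prod_induction _ (fun x => x ∈ ({-1, 1} : Set ℝ)) ?_ ?_ ?_
      · rintro a b (ha | ha) (hb | hb) <;>
          simp_all [Set.mem_insert_iff, Set.mem_singleton_iff]
      · simp
      · exact fun i _ => (p.1 i).1.2⟩,
   ⟨∏ i, ((p.1 i).2 : ℝ), Set.mem_Ici.mpr (Finset.prod_nonneg fun i _ => (p.1 i).2.2)⟩)

/-- The positive special point `0⁺ = (1, 0) ∈ {-1,1} × [0,∞)`. -/
def posZero : SignRay := (⟨1, by norm_num⟩, ⟨0, Set.self_mem_Ici⟩)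

/-- The stratum `S = {x ∈ ℝⁿ : x₁ = ⋯ = x_k = 0}`. -/
def Sset (k m : ℕ) : Set ((Fin k → ℝ) × (Fin m → ℝ)) := {x | ∀ i, x.1 i = 0}

/-- The positive part `α⁻¹(S) ∩ π̃⁻¹((1,0))` of the blow-up over the stratum `S`. -/
def posPart (k m : ℕ) : Set ((Fin k → SignRay) × (Fin m → ℝ)) :=
  blowDownR k m ⁻¹' Sset k m ∩ tpiR k m ⁻¹' ({posZero} : Set SignRay)

/-- The restriction `α : α⁻¹(S) ∩ π̃⁻¹((1,0)) → S`. -/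
def posPartMap (k m : ℕ) : posPart k m → Sset k m :=
  fun q => ⟨blowDownR k m q.1, q.2.1⟩

/-!
Over the stratum each `ε_i r_i` vanishes with `ε_i = ±1`, so every radius `r_i` is `0`; then
`r₁⋯r_k = 0` holds automatically (as `k ≥ 1`), and `π̃ = (1,0)` only asks `ε₁⋯ε_k = 1`. So the
positive part is the product of `S` with the finite discrete set of sign vectors of product `1`,
and `α` is the projection: a trivial covering. Such a sign vector is determined by its first
`k - 1` entries, whence `2^{k-1}` sheets.
-/

section TrivialCover

variable {X B F : Type*} [TopologicalSpace X] [TopologicalSpace B] [TopologicalSpace F] {f : X → B}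

def Bundle.Trivialization.ofHomeomorphProd (e : X ≃ₜ F × B) (he : ∀ x, (e x).2 = f x) :
    Bundle.Trivialization F f where
  toOpenPartialHomeomorph := (e.trans (Homeomorph.prodComm F B)).toOpenPartialHomeomorph
  baseSet := Set.univ
  open_baseSet := isOpen_univ
  source_eq := rfl
  target_eq := by simp
  proj_toFun x _ := he x

theorem IsCoveringMap.of_homeomorph_prod [DiscreteTopology F] (e : X ≃ₜ F × B)
    (he : ∀ x, (e x).2 = f x) : IsCoveringMap f :=
  IsFiberBundle.isCoveringMap fun _ => ⟨.ofHomeomorphProd e he, Set.mem_univ _⟩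

theorem Nat.card_preimage_singleton_of_homeomorph_prod (e : X ≃ₜ F × B)
    (he : ∀ x, (e x).2 = f x) (b : B) : Nat.card (f ⁻¹' {b}) = Nat.card F :=
  Nat.card_congr ((Bundle.Trivialization.ofHomeomorphProd e he).preimageSingletonHomeomorph
    (Set.mem_univ b)).toEquiv

end TrivialCover

section SelfInverseProducts

variable {M : Type*} [CommMonoid M] {s : Set M}

theorem Finset.prod_mem_of_mul_mem {ι : Type*} (t : Finset ι) (one_mem : 1 ∈ s)
    (mul_mem : ∀ x ∈ s, ∀ y ∈ s, x * y ∈ s) (g : ι → s) : ∏ i ∈ t, (g i : M) ∈ s :=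
  Finset.prod_induction _ (· ∈ s) (fun x y hx hy => mul_mem x hx y hy) one_mem fun i _ => (g i).2

def finSuccProdEqOneEquiv (one_mem : 1 ∈ s) (mul_mem : ∀ x ∈ s, ∀ y ∈ s, x * y ∈ s)
    (mul_self : ∀ x ∈ s, x * x = 1) (n : ℕ) :
    {ε : Fin (n + 1) → s // ∏ i, (ε i : M) = 1} ≃ (Fin n → s) where
  toFun ε i := ε.1 i.castSucc
  invFun g := ⟨Fin.snoc g ⟨∏ i, (g i : M), Finset.prod_mem_of_mul_mem _ one_mem mul_mem g⟩, by
    rw [Fin.prod_univ_castSucc]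
    simp only [Fin.snoc_castSucc, Fin.snoc_last]
    exact mul_self _ (Finset.prod_mem_of_mul_mem _ one_mem mul_mem g)⟩
  left_inv := by
    rintro ⟨ε, hε⟩
    rw [Fin.prod_univ_castSucc] at hε
    have hlast : (ε (Fin.last n) : M) = ∏ i : Fin n, (ε i.castSucc : M) := by
      calc (ε (Fin.last n) : M)
          = (∏ i : Fin n, (ε i.castSucc : M)) * ε (Fin.last n) * ε (Fin.last n) := by
            rw [hε, one_mul]
        _ = ∏ i : Fin n, (ε i.castSucc : M) := by
            rw [mul_assoc, mul_self _ (ε _).2, mul_one]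
    refine Subtype.ext (funext fun i => Fin.lastCases ?_ (fun j => ?_) i)
    · exact Subtype.ext (by simpa using hlast.symm)
    · simp
  right_inv g := funext fun i => by simp

theorem Nat.card_finSucc_prod_eq_one (one_mem : 1 ∈ s) (mul_mem : ∀ x ∈ s, ∀ y ∈ s, x * y ∈ s)
    (mul_self : ∀ x ∈ s, x * x = 1) (n : ℕ) :
    Nat.card {ε : Fin (n + 1) → s // ∏ i, (ε i : M) = 1} = Nat.card s ^ n := by
  rw [Nat.card_congr (finSuccProdEqOneEquiv one_mem mul_mem mul_self n), Nat.card_fun,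
    Nat.card_fin]

end SelfInverseProducts

theorem signs_mul_self : ∀ x ∈ ({-1, 1} : Set ℝ), x * x = 1 := by
  rintro x (rfl | rfl) <;> norm_num

theorem signs_mul_mem : ∀ x ∈ ({-1, 1} : Set ℝ), ∀ y ∈ ({-1, 1} : Set ℝ),
    x * y ∈ ({-1, 1} : Set ℝ) := by
  rintro x (rfl | rfl) y (rfl | rfl) <;> norm_num

abbrev PosSigns (k : ℕ) : Type := {ε : Fin k → ({-1, 1} : Set ℝ) // ∏ i, (ε i : ℝ) = 1}

theorem card_posSigns {k : ℕ} (hk : 1 ≤ k) : Nat.card (PosSigns k) = 2 ^ (k - 1) := by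
  obtain ⟨n, rfl⟩ : ∃ n, k = n + 1 := ⟨k - 1, by omega⟩
  rw [Nat.card_finSucc_prod_eq_one (by norm_num) signs_mul_mem signs_mul_self,
    Nat.card_coe_set_eq, Set.ncard_pair (by norm_num), Nat.add_sub_cancel]

theorem mem_posPart {k m : ℕ} (hk : 1 ≤ k) {q : (Fin k → SignRay) × (Fin m → ℝ)} :
    q ∈ posPart k m ↔ (∀ i, ((q.1 i).2 : ℝ) = 0) ∧ ∏ i, ((q.1 i).1 : ℝ) = 1 := by
  unfold _root_.posPart Sset blowDownR tpiR posZero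
  simp only [Set.mem_inter_iff, Set.mem_preimage, Set.mem_ofPred_eq, Set.mem_singleton_iff,
    Prod.ext_iff, Subtype.ext_iff]
  constructor
  · rintro ⟨hα, hε, -⟩
    exact ⟨fun i => (mul_eq_zero.1 (hα i)).resolve_left
      (left_ne_zero_of_mul_eq_one (signs_mul_self _ (q.1 i).1.2)), hε⟩
  · rintro ⟨hr, hε⟩
    exact ⟨fun i => by rw [hr i, mul_zero], hε,
      Finset.prod_eq_zero (Finset.mem_univ ⟨0, hk⟩) (hr _)⟩

def posPartHomeo (k m : ℕ) (hk : 1 ≤ k) : posPart k m ≃ₜ PosSigns k × Sset k m where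
  toFun q := (⟨fun i => (q.1.1 i).1, ((mem_posPart hk).1 q.2).2⟩, posPartMap k m q)
  invFun p := ⟨(fun i => (p.1.1 i, ⟨0, Set.self_mem_Ici⟩), p.2.1.2),
    (mem_posPart hk).2 ⟨fun _ => rfl, p.1.2⟩⟩
  left_inv q := by
    ext i
    · rfl
    · exact (((mem_posPart hk).1 q.2).1 i).symm
    · rfl
  right_inv p := by
    refine Prod.ext rfl (Subtype.ext (Prod.ext (funext fun i => ?_) rfl))
    simpa [posPartMap, blowDownR] using (p.2.2 i).symm
  continuous_toFun := by
    unfold posPartMap blowDownR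
    fun_prop
  continuous_invFun := by
    have hε : Continuous fun p : PosSigns k × Sset k m => (p.1 : Fin k → ({-1, 1} : Set ℝ)) :=
      continuous_subtype_val.comp continuous_fst
    exact .subtype_mk (.prodMk
      (continuous_pi fun i => ((continuous_apply i).comp hε).prodMk continuous_const)
      (by fun_prop)) _

/-- Let `k ≥ 1`, `S = {x ∈ ℝⁿ : x₁ = ⋯ = x_k = 0}`, `α` the local real blow-down and
`π̃(((ε₁,r₁),…,(ε_k,r_k)), y) = (ε₁⋯ε_k, r₁⋯r_k)`. Then the restriction of `α` to
`α⁻¹(S) ∩ π̃⁻¹((1,0)) → S` is a covering map, every fibre of which has exactly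
`2^{k−1}` elements; it is homeomorphic over `S` to the trivial cover
`{ε ∈ {-1,1}^k : ε₁⋯ε_k = 1} × S`. -/
theorem posPartMap_cover (k m : ℕ) (hk : 1 ≤ k) :
    IsCoveringMap (posPartMap k m) ∧
    (∀ p : Sset k m,
      Nat.card ((posPartMap k m) ⁻¹' ({p} : Set (Sset k m))) = 2 ^ (k - 1)) ∧
    ∃ e : posPart k m ≃ₜ
        (({ε : Fin k → ({-1, 1} : Set ℝ) // ∏ i, (ε i : ℝ) = 1}) × (Sset k m)),
      ∀ q, (e q).2 = posPartMap k m q := by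
  have he : ∀ q, (posPartHomeo k m hk q).2 = posPartMap k m q := fun _ => rfl
  refine ⟨.of_homeomorph_prod _ he, fun p => ?_, _, he⟩
  rw [Nat.card_preimage_singleton_of_homeomorph_prod _ he, card_posSigns hk]
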